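/- Let X be a complex Banach space with dim X ≥ 3 and let A ∈ B(X). Then A = 0 if and only if δ(ATA) = 1 and δ(TAT) = 1 for every T ∈ B(X). -/

import Mathlib

/-- The ascent of a bounded linear operator: the least `n : ℕ` with
`ker (T ^ n) = ker (T ^ (n+1))`, and `⊤` (i.e. `∞`) if no such `n` exists. -/
noncomputable def ascent {X : Type*} [NormedAddCommGroup X] [NormedSpace ℂ X]
    (T : X →L[ℂ] X) : ℕ∞ :=
  sInf (Nat.cast '' {m : ℕ | LinearMap.ker ((T ^ m : X →L[ℂ] X) : X →ₗ[ℂ] X) = LinearMap.ker ((T ^ (m + 1) : X →L[ℂ] X) : X →ₗ[ℂ] X)})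

/-- The descent of a bounded linear operator: the least `n : ℕ` with
`range (T ^ n) = range (T ^ (n+1))`, and `⊤` (i.e. `∞`) if no such `n` exists. -/
noncomputable def descent {X : Type*} [NormedAddCommGroup X] [NormedSpace ℂ X]
    (T : X →L[ℂ] X) : ℕ∞ :=
  sInf (Nat.cast '' {m : ℕ | LinearMap.range ((T ^ m : X →L[ℂ] X) : X →ₗ[ℂ] X) = LinearMap.range ((T ^ (m + 1) : X →L[ℂ] X) : X →ₗ[ℂ] X)})

/-! The zero operator has descent one, so every triple product of `A = 0` does. If `A ≠ 0` is a
scalar, `A * 1 * A` is surjective and has descent zero. Otherwise some `u` is not an eigenvector,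
and Hahn–Banach gives a functional `g` with `g u = 0`, `g (A u) = 1`; the rank-one operator
`T = g(·) u` then satisfies `T A T = T` and `T ^ 2 = 0 ≠ T`, so `T A T` has descent two. -/

theorem SeparatingDual.exists_eq_zero_eq_one {R V : Type*} [Field R] [TopologicalSpace R]
    [IsTopologicalRing R] [AddCommGroup V] [TopologicalSpace V] [Module R V]
    [SeparatingDual R V] {x y : V} (h : LinearIndependent R ![x, y]) :
    ∃ g : StrongDual R V, g x = 0 ∧ g y = 1 := by
  obtain ⟨g, hg⟩ := (dualMap_surjective_iff (f := Fintype.linearCombination R ![x, y])).mpr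
    h.fintypeLinearCombination_injective (LinearMap.proj 1)
  refine ⟨g, ?_, ?_⟩
  · simpa using LinearMap.congr_fun hg (Pi.single 0 1)
  · simpa using LinearMap.congr_fun hg (Pi.single 1 1)

theorem ContinuousLinearMap.smulRight_mul_mul_smulRight {R M : Type*} [CommSemiring R]
    [TopologicalSpace R] [AddCommMonoid M] [TopologicalSpace M] [Module R M]
    [ContinuousSMul R M] (g : StrongDual R M) (u : M) (A : M →L[R] M) :
    g.smulRight u * A * g.smulRight u = g (A u) • g.smulRight u := by
  ext x
  simp [smul_smul, mul_comm]

theorem ContinuousLinearMap.smulRight_sq_eq_zero {R M : Type*} [CommSemiring R]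
    [TopologicalSpace R] [AddCommMonoid M] [TopologicalSpace M] [Module R M]
    [ContinuousSMul R M] {g : StrongDual R M} {u : M} (hgu : g u = 0) :
    g.smulRight u ^ 2 = 0 := by
  ext x
  simp [sq, hgu]

section Descent

open LinearMap (range)

variable {X : Type*} [NormedAddCommGroup X] [NormedSpace ℂ X] {T : X →L[ℂ] X}

theorem descent_le {n : ℕ}
    (h : range ((T ^ n : X →L[ℂ] X) : X →ₗ[ℂ] X) = range ((T ^ (n + 1) : X →L[ℂ] X) : X →ₗ[ℂ] X)) :
    descent T ≤ n :=
  sInf_le ⟨n, h, rfl⟩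

theorem le_descent {n : ℕ}
    (h : ∀ m < n, range ((T ^ m : X →L[ℂ] X) : X →ₗ[ℂ] X) ≠
      range ((T ^ (m + 1) : X →L[ℂ] X) : X →ₗ[ℂ] X)) :
    n ≤ descent T := by
  refine le_sInf ?_
  rintro _ ⟨m, hm, rfl⟩
  by_contra! hlt
  exact h m (by exact_mod_cast hlt) hm

theorem descent_eq_zero_of_surjective (hT : Function.Surjective T) : descent T = 0 := by
  refine nonpos_iff_eq_zero.mp (descent_le ?_)
  rw [pow_zero, zero_add, pow_one, LinearMap.range_eq_top.mpr hT]
  exact LinearMap.range_eq_top.mpr Function.surjective_id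

theorem descent_zero [Nontrivial X] : descent (0 : X →L[ℂ] X) = 1 := by
  refine le_antisymm (descent_le ?_) (le_descent ?_)
  · simp
  · intro m hm
    obtain rfl : m = 0 := by omega
    simp [LinearMap.range_eq_bot]

theorem descent_eq_two_of_sq_eq_zero (hT : T ≠ 0) (hT2 : T ^ 2 = 0) : descent T = 2 := by
  refine le_antisymm (descent_le ?_) (le_descent ?_)
  · simp [pow_succ, hT2]
  · obtain ⟨x, hx⟩ : ∃ x, T x ≠ 0 := by
      by_contra! h
      exact hT (ContinuousLinearMap.ext h)
    intro m hm
    interval_cases m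
    · intro hrange
      obtain ⟨y, hy⟩ : x ∈ range ((T ^ 1 : X →L[ℂ] X) : X →ₗ[ℂ] X) := by
        rw [← hrange]
        exact ⟨x, by simp⟩
      apply hx
      simpa [← hy, sq] using congr($hT2 y)
    · intro hrange
      have : T x ∈ range ((T ^ (1 + 1) : X →L[ℂ] X) : X →ₗ[ℂ] X) := by
        rw [← hrange]
        exact ⟨x, by simp⟩
      simp only [hT2, ContinuousLinearMap.toLinearMap_zero, LinearMap.range_zero] at this
      exact hx this

end Descent

theorem eq_zero_iff_descent_triple_eq_one_general {X : Type*} [NormedAddCommGroup X]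
    [NormedSpace ℂ X] (hdim : 3 ≤ Module.rank ℂ X)
    (A : X →L[ℂ] X) :
    A = 0 ↔ ∀ T : X →L[ℂ] X, descent (A * T * A) = 1 ∧ descent (T * A * T) = 1 := by
  have : Nontrivial X := rank_pos_iff_nontrivial.mp (lt_of_lt_of_le (by norm_num) hdim)
  refine ⟨by rintro rfl T; simp [descent_zero], fun h => ?_⟩
  by_contra hA
  by_cases hcol : ∀ v, ¬ LinearIndependent ℂ ![v, A v]
  · obtain ⟨a, ha⟩ := LinearMap.exists_eq_smul_id_of_forall_notLinearIndependent hcol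
    have hA_apply (x : X) : A x = a • x := LinearMap.congr_fun ha x
    have ha0 : a ≠ 0 := by
      rintro rfl
      exact hA (ContinuousLinearMap.ext fun x => by simp [hA_apply])
    have hsurj : Function.Surjective A := fun x => ⟨a⁻¹ • x, by simp [hA_apply, smul_smul, ha0]⟩
    have := (h 1).1
    rw [mul_one, descent_eq_zero_of_surjective (by simpa using hsurj.comp hsurj)] at this
    exact zero_ne_one this
  · push Not at hcol
    obtain ⟨u, hu⟩ := hcol
    obtain ⟨g, hgu, hgAu⟩ := SeparatingDual.exists_eq_zero_eq_one hu
    have hT : g.smulRight u ≠ 0 := fun h0 => hu.ne_zero 0 (by simpa [hgAu] using congr($h0 (A u)))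
    have := (h (g.smulRight u)).2
    rw [ContinuousLinearMap.smulRight_mul_mul_smulRight, hgAu, one_smul,
      descent_eq_two_of_sq_eq_zero hT (ContinuousLinearMap.smulRight_sq_eq_zero hgu)] at this
    norm_num at this

theorem eq_zero_iff_descent_triple_eq_one {X : Type*} [NormedAddCommGroup X]
    [NormedSpace ℂ X] [CompleteSpace X] (hdim : 3 ≤ Module.rank ℂ X)
    (A : X →L[ℂ] X) :
    A = 0 ↔ ∀ T : X →L[ℂ] X, descent (A * T * A) = 1 ∧ descent (T * A * T) = 1 :=
  eq_zero_iff_descent_triple_eq_one_general hdim A
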